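/- Let H be a graph (or r-uniform hypergraph), and suppose there exists an n₀-vertex graph G with edge density α₀ = t_{K_r}(G) and homomorphism density β₀ = t_H(G) satisfying β₀ < α₀^{e(H)} and β₀/α₀ ≥ n₀^{r - v(H)}. Then there exist constants c, γ > 0 such that ex(n, H) ≥ γ · n^{r - (v(H)-r)/(e(H)-1) + c} for all sufficiently large n. -/
import Mathlib


open Finset

/-- Number of homomorphisms of the `r`-graph with edge set `EH` on `Fin vH`
into the `r`-graph with edge set `EG` on `Fin n`: maps sending every edge onto an edge. -/
noncomputable def hypHomCount {vH n : ℕ} (EH : Finset (Finset (Fin vH))) (EG : Finset (Finset (Fin n))) : ℕ :=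
  Nat.card {f : Fin vH → Fin n // ∀ e ∈ EH, e.image f ∈ EG}

/-- `EG` is `H`-free: there is no injection mapping every edge of `H` onto an edge of `G`. -/
def hypFree {vH n : ℕ} (EH : Finset (Finset (Fin vH))) (EG : Finset (Finset (Fin n))) : Prop :=
  ¬ ∃ f : Fin vH → Fin n, Function.Injective f ∧ ∀ e ∈ EH, e.image f ∈ EG

/-- The extremal number `ex(n, H)`: the maximum number of edges in an `n`-vertex
`H`-free `r`-uniform hypergraph. -/
noncomputable def exNum (r n : ℕ) {vH : ℕ} (EH : Finset (Finset (Fin vH))) : ℕ :=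
  sSup {N : ℕ | ∃ EG : Finset (Finset (Fin n)),
    (∀ e ∈ EG, e.card = r) ∧ hypFree EH EG ∧ N = EG.card}

namespace Stmt15

variable {W : Type*} [Fintype W] [DecidableEq W]

/-- Homomorphisms as a finset. -/
def homsF {vH : ℕ} (EH : Finset (Finset (Fin vH))) (E : Finset (Finset W)) :
    Finset (Fin vH → W) :=
  univ.filter (fun f => ∀ e ∈ EH, e.image f ∈ E)

/-- Ordered edges. -/
def oeF (r : ℕ) (E : Finset (Finset W)) : Finset (Fin r → W) :=
  univ.filter (fun ψ => Function.Injective ψ ∧ univ.image ψ ∈ E)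

lemma card_oeF {r : ℕ} {E : Finset (Finset W)} (hE : ∀ e ∈ E, e.card = r) :
    (oeF r E).card = r.factorial * E.card := by
  rw [Finset.card_eq_sum_card_fiberwise
    (f := fun ψ : Fin r → W => univ.image ψ) (t := E)
    (fun ψ hψ => (mem_filter.1 hψ).2.2)]
  rw [Finset.sum_congr rfl (fun e he => ?_), Finset.sum_const, smul_eq_mul, mul_comm]
  -- fiber card = r!
  have hec : e.card = r := hE e he
  have hset : (oeF r E).filter (fun ψ => univ.image ψ = e)
      = univ.filter (fun ψ : Fin r → W => Function.Injective ψ ∧ ∀ i, ψ i ∈ e) := by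
    ext ψ
    simp only [oeF, mem_filter, mem_univ, true_and]
    constructor
    · rintro ⟨⟨hinj, _⟩, heq⟩
      exact ⟨hinj, fun i => heq ▸ Finset.mem_image_of_mem ψ (mem_univ i)⟩
    · rintro ⟨hinj, hin⟩
      have hsub : univ.image ψ ⊆ e := by
        intro x hx
        obtain ⟨i, _, rfl⟩ := Finset.mem_image.1 hx
        exact hin i
      have hcard : (univ.image ψ).card = r := by
        rw [Finset.card_image_of_injective _ hinj, Finset.card_univ, Fintype.card_fin]
      have : univ.image ψ = e := Finset.eq_of_subset_of_card_le hsub (by omega)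
      exact ⟨⟨hinj, this ▸ he⟩, this⟩
  rw [hset]
  have : (univ.filter (fun ψ : Fin r → W => Function.Injective ψ ∧ ∀ i, ψ i ∈ e)).card
      = Fintype.card {ψ : Fin r → W // Function.Injective ψ ∧ ∀ i, ψ i ∈ e} :=
    (Fintype.card_subtype _).symm
  rw [this]
  have : Fintype.card {ψ : Fin r → W // Function.Injective ψ ∧ ∀ i, ψ i ∈ e}
      = Fintype.card (Fin r ↪ {x // x ∈ e}) := by
    refine Fintype.card_congr ⟨fun ψ => ⟨fun i => ⟨ψ.1 i, ψ.2.2 i⟩, fun a b h => ψ.2.1 (by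
        simpa using congrArg Subtype.val h)⟩,
      fun g => ⟨fun i => (g i : W), fun a b h => g.injective (Subtype.ext h), fun i => (g i).2⟩,
      fun ψ => rfl, fun g => by ext i; rfl⟩
  rw [this, Fintype.card_embedding_eq, Fintype.card_fin, Fintype.card_coe, hec,
    Nat.descFactorial_self]

/-- k-th tensor power of an r-uniform hypergraph. -/
def powE (r n₀ : ℕ) (EG : Finset (Finset (Fin n₀))) (k : ℕ) :
    Finset (Finset (Fin k → Fin n₀)) :=
  univ.filter (fun S => S.card = r ∧ ∀ j, S.image (fun v => v j) ∈ EG)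

lemma powE_uniform {r n₀ k : ℕ} {EG : Finset (Finset (Fin n₀))} :
    ∀ e ∈ powE r n₀ EG k, e.card = r := fun e he => (mem_filter.1 he).2.1

lemma card_oeF_powE {r n₀ k : ℕ} {EG : Finset (Finset (Fin n₀))}
    (hG : ∀ e ∈ EG, e.card = r) (hk : 0 < k) :
    (oeF r (powE r n₀ EG k)).card = (oeF r EG).card ^ k := by
  rw [← Fintype.card_piFinset_const (oeF r EG) k]
  apply Finset.card_bij' (fun ψ _ => Function.swap ψ) (fun g _ => Function.swap g)
  · intro ψ hψ
    obtain ⟨-, hinj, himg⟩ := mem_filter.1 hψ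
    obtain ⟨hcard, hproj⟩ := (mem_filter.1 himg).2
    rw [Fintype.mem_piFinset]
    intro j
    have himij : univ.image (fun i => ψ i j) = (univ.image ψ).image (fun v => v j) := by
      rw [Finset.image_image]; rfl
    have hmem : univ.image (fun i => ψ i j) ∈ EG := by rw [himij]; exact hproj j
    have hcardj : (univ.image fun i => ψ i j).card = r := hG _ hmem
    have hinjj : Function.Injective (fun i : Fin r => ψ i j) := by
      have hio : Set.InjOn (fun i : Fin r => ψ i j) ↑(univ : Finset (Fin r)) := by
        apply Finset.injOn_of_card_image_eq
        rw [hcardj, Finset.card_univ, Fintype.card_fin]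
      exact fun a b hab => hio (Finset.mem_coe.2 (mem_univ a)) (Finset.mem_coe.2 (mem_univ b)) hab
    exact mem_filter.2 ⟨mem_univ _, hinjj, hmem⟩
  · intro g hg
    rw [Fintype.mem_piFinset] at hg
    have hcomp : ∀ j, Function.Injective (fun i : Fin r => g j i) ∧
        univ.image (fun i => g j i) ∈ EG := by
      intro j; obtain ⟨-, h1, h2⟩ := mem_filter.1 (hg j); exact ⟨h1, h2⟩
    have hinj : Function.Injective (Function.swap g) := by
      intro a b h
      exact (hcomp ⟨0, hk⟩).1 (congrFun h ⟨0, hk⟩)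
    refine mem_filter.2 ⟨mem_univ _, hinj, mem_filter.2 ⟨mem_univ _, ?_, ?_⟩⟩
    · rw [Finset.card_image_of_injective _ hinj, Finset.card_univ, Fintype.card_fin]
    · intro j
      have : (univ.image (Function.swap g)).image (fun v => v j)
          = univ.image (fun i => g j i) := by rw [Finset.image_image]; rfl
      rw [this]; exact (hcomp j).2
  · intro ψ _; rfl
  · intro g _; rfl

lemma card_homsF_powE {r n₀ k vH : ℕ} {EH : Finset (Finset (Fin vH))}
    {EG : Finset (Finset (Fin n₀))}
    (hH : ∀ e ∈ EH, e.card = r) (hG : ∀ e ∈ EG, e.card = r) (hk : 0 < k) :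
    (homsF EH (powE r n₀ EG k)).card = (homsF EH EG).card ^ k := by
  rw [← Fintype.card_piFinset_const (homsF EH EG) k]
  apply Finset.card_bij' (fun f _ => Function.swap f) (fun g _ => Function.swap g)
  · intro f hf
    have hf' := (mem_filter.1 hf).2
    rw [Fintype.mem_piFinset]
    intro j
    refine mem_filter.2 ⟨mem_univ _, fun e he => ?_⟩
    have heq : e.image (fun x => f x j) = (e.image f).image (fun v => v j) := by
      rw [Finset.image_image]; rfl
    rw [heq]
    exact (mem_filter.1 (hf' e he)).2.2 j
  · intro g hg
    rw [Fintype.mem_piFinset] at hg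
    refine mem_filter.2 ⟨mem_univ _, fun e he => ?_⟩
    have hcomp : ∀ j, e.image (fun x => g j x) ∈ EG :=
      fun j => (mem_filter.1 (hg j)).2 e he
    refine mem_filter.2 ⟨mem_univ _, ?_, fun j => ?_⟩
    · have hinj : Set.InjOn (Function.swap g) e := by
        intro a ha b hb h
        have hj0 : (e.image (fun x => g ⟨0, hk⟩ x)).card = r := hG _ (hcomp ⟨0, hk⟩)
        have hinj0 : Set.InjOn (fun x => g ⟨0, hk⟩ x) e := by
          apply Finset.injOn_of_card_image_eq
          rw [hj0, hH e he]
        exact hinj0 ha hb (congrFun h ⟨0, hk⟩)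
      rw [Finset.card_image_of_injOn hinj, hH e he]
    · have : (e.image (Function.swap g)).image (fun v => v j)
          = e.image (fun x => g j x) := by rw [Finset.image_image]; rfl
      rw [this]; exact hcomp j
  · intro f _; rfl
  · intro g _; rfl

lemma card_filter_supersets {t s : ℕ} (e : Finset W) (het : e.card = t) (hts : t ≤ s) :
    (((univ : Finset W).powersetCard s).filter (fun S => e ⊆ S)).card
      = (Fintype.card W - t).choose (s - t) := by
  have key : (((univ : Finset W).powersetCard s).filter (fun S => e ⊆ S)).card
      = ((univ \ e).powersetCard (s - t)).card := by
    apply Finset.card_bij' (fun S _ => S \ e) (fun T _ => T ∪ e)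
    · intro S hS
      obtain ⟨hS1, hS2⟩ := mem_filter.1 hS
      rw [Finset.mem_powersetCard] at hS1 ⊢
      refine ⟨Finset.sdiff_subset_sdiff hS1.1 le_rfl, ?_⟩
      rw [Finset.card_sdiff_of_subset hS2, hS1.2, het]
    · intro T hT
      rw [Finset.mem_powersetCard] at hT
      have hdisj : Disjoint T e := Finset.disjoint_of_subset_left hT.1 Finset.sdiff_disjoint
      refine mem_filter.2 ⟨Finset.mem_powersetCard.2 ⟨Finset.subset_univ _, ?_⟩,
        Finset.subset_union_right⟩
      rw [Finset.card_union_of_disjoint hdisj, hT.2, het]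
      omega
    · intro S hS
      exact Finset.sdiff_union_of_subset (mem_filter.1 hS).2
    · intro T hT
      rw [Finset.mem_powersetCard] at hT
      have hdisj : Disjoint T e := Finset.disjoint_of_subset_left hT.1 Finset.sdiff_disjoint
      rw [Finset.union_sdiff_distrib, Finset.sdiff_self, Finset.union_empty,
        Finset.sdiff_eq_self_of_disjoint hdisj]
  rw [key, Finset.card_powersetCard, Finset.card_sdiff_of_subset (Finset.subset_univ e),
    Finset.card_univ, het]

lemma choose_ratio {N n t : ℕ} (htn : t ≤ n) (hnN : n ≤ N) :
    (N - t).choose (n - t) * N.descFactorial t = N.choose n * n.descFactorial t := by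
  have htN : t ≤ N := le_trans htn hnN
  apply Nat.eq_of_mul_eq_mul_right (show 0 < (n - t).factorial * (N - n).factorial from
    Nat.mul_pos (Nat.factorial_pos _) (Nat.factorial_pos _))
  have e1 : (N - t).choose (n - t) * (n - t).factorial * ((N - t) - (n - t)).factorial
      = (N - t).factorial := Nat.choose_mul_factorial_mul_factorial (by omega)
  rw [show N - t - (n - t) = N - n by omega] at e1
  have e2 : (n - t).factorial * n.descFactorial t = n.factorial :=
    Nat.factorial_mul_descFactorial htn
  have e3 : (N - t).factorial * N.descFactorial t = N.factorial :=
    Nat.factorial_mul_descFactorial htN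
  have e4 : N.choose n * n.factorial * (N - n).factorial = N.factorial :=
    Nat.choose_mul_factorial_mul_factorial hnN
  calc (N - t).choose (n - t) * N.descFactorial t * ((n - t).factorial * (N - n).factorial)
      = ((N - t).choose (n - t) * (n - t).factorial * (N - n).factorial)
        * N.descFactorial t := by ring
    _ = (N - t).factorial * N.descFactorial t := by rw [e1]
    _ = N.factorial := e3
    _ = N.choose n * n.factorial * (N - n).factorial := e4.symm
    _ = N.choose n * ((n - t).factorial * n.descFactorial t) * (N - n).factorial := by rw [e2]
    _ = N.choose n * n.descFactorial t * ((n - t).factorial * (N - n).factorial) := by ring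

lemma sum_card_filter_subsets {E : Finset (Finset W)} {t s : ℕ}
    (hE : ∀ e ∈ E, e.card = t) (hts : t ≤ s) :
    ∑ S ∈ (univ : Finset W).powersetCard s, (E.filter (fun e => e ⊆ S)).card
      = E.card * (Fintype.card W - t).choose (s - t) := by
  have : ∀ S, (E.filter (fun e => e ⊆ S)).card = ∑ e ∈ E, if e ⊆ S then 1 else 0 := by
    intro S; rw [Finset.card_filter]
  rw [Finset.sum_congr rfl (fun S _ => this S), Finset.sum_comm]
  have inner : ∀ e ∈ E, (∑ S ∈ (univ : Finset W).powersetCard s, if e ⊆ S then 1 else 0)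
      = (Fintype.card W - t).choose (s - t) := by
    intro e he
    rw [← Finset.card_filter]
    exact card_filter_supersets e (hE e he) hts
  rw [Finset.sum_congr rfl inner, Finset.sum_const, smul_eq_mul, mul_comm]

/-- Injective homomorphisms landing inside `S`. -/
def injHomsIn {vH : ℕ} (EH : Finset (Finset (Fin vH))) (E : Finset (Finset W))
    (S : Finset W) : Finset (Fin vH → W) :=
  univ.filter (fun f => Function.Injective f ∧ (∀ e ∈ EH, e.image f ∈ E) ∧ ∀ x, f x ∈ S)

lemma sum_card_injHomsIn {vH s : ℕ} (EH : Finset (Finset (Fin vH)))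
    (E : Finset (Finset W)) (hvs : vH ≤ s) :
    ∑ S ∈ (univ : Finset W).powersetCard s, (injHomsIn EH E S).card
      ≤ (homsF EH E).card * (Fintype.card W - vH).choose (s - vH) := by
  have hrw : ∀ S : Finset W, injHomsIn EH E S
      = ((homsF EH E).filter (fun f => Function.Injective f)).filter
          (fun f => univ.image f ⊆ S) := by
    intro S
    ext f
    simp only [injHomsIn, homsF, mem_filter, mem_univ, true_and, Finset.image_subset_iff]
    tauto
  have hcount : ∀ S : Finset W, (injHomsIn EH E S).card
      = ∑ f ∈ (homsF EH E).filter (fun f => Function.Injective f),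
          if univ.image f ⊆ S then 1 else 0 := by
    intro S; rw [hrw S, Finset.card_filter]
  rw [Finset.sum_congr rfl (fun S _ => hcount S), Finset.sum_comm]
  have inner : ∀ f ∈ (homsF EH E).filter (fun f => Function.Injective f),
      (∑ S ∈ (univ : Finset W).powersetCard s, if univ.image f ⊆ S then 1 else 0)
        = (Fintype.card W - vH).choose (s - vH) := by
    intro f hf
    rw [← Finset.card_filter]
    apply card_filter_supersets
    · rw [Finset.card_image_of_injective _ (mem_filter.1 hf).2, Finset.card_univ,
        Fintype.card_fin]
    · exact hvs
  rw [Finset.sum_congr rfl inner, Finset.sum_const, smul_eq_mul]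
  have hle : ((homsF EH E).filter (fun f => Function.Injective f)).card ≤ (homsF EH E).card :=
    Finset.card_filter_le _ _
  exact Nat.mul_le_mul_right _ hle

lemma hypHomCount_eq_card {vH n : ℕ} (EH : Finset (Finset (Fin vH)))
    (EG : Finset (Finset (Fin n))) : hypHomCount EH EG = (homsF EH EG).card := by
  rw [hypHomCount, Nat.card_eq_fintype_card, homsF]
  exact Fintype.card_subtype _

lemma sub_pow_le_descFactorial (n t : ℕ) : (n - t) ^ t ≤ n.descFactorial t := by
  rw [Nat.descFactorial_eq_prod_range]
  calc (n - t) ^ t = ∏ _i ∈ Finset.range t, (n - t) := by rw [Finset.prod_const, Finset.card_range]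
    _ ≤ ∏ i ∈ Finset.range t, (n - i) :=
        Finset.prod_le_prod' (fun i hi => Nat.sub_le_sub_left (le_of_lt (mem_range.1 hi)) n)

lemma le_exNum {r n vH : ℕ} (EH : Finset (Finset (Fin vH))) (EF : Finset (Finset (Fin n)))
    (h1 : ∀ e ∈ EF, e.card = r) (h2 : hypFree EH EF) : EF.card ≤ exNum r n EH := by
  apply le_csSup
  · refine ⟨Fintype.card (Finset (Fin n)), ?_⟩
    rintro N ⟨E, -, -, rfl⟩
    exact le_trans (Finset.card_le_univ E) (le_of_eq (Finset.card_univ))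
  · exact ⟨EF, h1, h2, rfl⟩

lemma main_construction {r vH : ℕ} (EH : Finset (Finset (Fin vH))) {e₀ : Finset (Fin vH)}
    (he₀ : e₀ ∈ EH)
    (E : Finset (Finset W)) (hE : ∀ e ∈ E, e.card = r) {n : ℕ}
    (hrn : r ≤ n) (hvn : vH ≤ n) (hn0 : 0 < n) (hnN : n ≤ Fintype.card W) :
    (E.card : ℝ) * ((Fintype.card W - r).choose (n - r))
      - ((homsF EH E).card : ℝ) * ((Fintype.card W - vH).choose (n - vH))
      ≤ (((Fintype.card W).choose n : ℕ) : ℝ) * (exNum r n EH) := by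
  classical
  set N := Fintype.card W with hN
  set 𝒮 := (univ : Finset W).powersetCard n with h𝒮
  have h𝒮ne : 𝒮.Nonempty := by
    rw [h𝒮, Finset.powersetCard_nonempty, Finset.card_univ]; exact hnN
  have h𝒮card : 𝒮.card = N.choose n := by
    rw [h𝒮, Finset.card_powersetCard, Finset.card_univ]
  have hCpos : (0 : ℝ) < (N.choose n : ℝ) := by
    exact_mod_cast Nat.choose_pos hnN
  set T : ℝ := (E.card : ℝ) * ((N - r).choose (n - r))
      - ((homsF EH E).card : ℝ) * ((N - vH).choose (n - vH)) with hT
  -- averaging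
  have havg : ∃ S ∈ 𝒮, T / (N.choose n : ℝ)
      ≤ ((E.filter (fun e => e ⊆ S)).card : ℝ) - ((injHomsIn EH E S).card : ℝ) := by
    apply Finset.exists_le_of_sum_le h𝒮ne
    have hconst : ∑ _S ∈ 𝒮, (T / (N.choose n : ℝ)) = T := by
      rw [Finset.sum_const, h𝒮card, nsmul_eq_mul]
      field_simp
    rw [hconst]
    rw [Finset.sum_sub_distrib]
    have h1 : (∑ S ∈ 𝒮, ((E.filter (fun e => e ⊆ S)).card : ℝ))
        = (E.card : ℝ) * ((N - r).choose (n - r)) := by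
      rw [← Nat.cast_sum, sum_card_filter_subsets hE hrn]
      push_cast; ring
    have h2 : (∑ S ∈ 𝒮, ((injHomsIn EH E S).card : ℝ))
        ≤ ((homsF EH E).card : ℝ) * ((N - vH).choose (n - vH)) := by
      rw [← Nat.cast_sum]
      exact_mod_cast sum_card_injHomsIn EH E hvn
    rw [hT, h1]
    linarith
  obtain ⟨S, hS𝒮, hSgood⟩ := havg
  have hScard : S.card = n := (Finset.mem_powersetCard.1 hS𝒮).2
  -- the bijection S ≃ Fin n
  have hε : {x // x ∈ S} ≃ Fin n := S.equivFin.trans (finCongr hScard)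
  set ε := hε with hεdef
  set j : W → Fin n := fun v => if h : v ∈ S then ε ⟨v, h⟩ else ⟨0, hn0⟩ with hj
  set p : Fin n → W := fun i => (ε.symm i : W) with hp
  have hpj : ∀ x ∈ S, p (j x) = x := by
    intro x hx
    simp only [hj, hp, dif_pos hx, Equiv.symm_apply_apply]
  have hpS : ∀ i, p i ∈ S := fun i => (ε.symm i).2
  have hpinj : Function.Injective p := by
    intro a b h
    exact ε.symm.injective (Subtype.ext h)
  have himgp : ∀ a : Finset W, a ⊆ S → (a.image j).image p = a := by
    intro a ha
    rw [Finset.image_image]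
    have : a.image (p ∘ j) = a.image id :=
      Finset.image_congr (fun x hx => hpj x (ha hx))
    rw [this, Finset.image_id]
  set D : Finset (Finset W) := (injHomsIn EH E S).image (fun f => e₀.image f) with hD
  set E' : Finset (Finset W) := (E.filter (fun e => e ⊆ S)) \ D with hE'
  set EF : Finset (Finset (Fin n)) := E'.image (fun a => a.image j) with hEF
  have hE'sub : ∀ a ∈ E', a ⊆ S ∧ a.card = r := by
    intro a ha
    have h' := mem_filter.1 (mem_sdiff.1 ha).1
    exact ⟨h'.2, hE _ h'.1⟩
  have hEFcard : EF.card = E'.card := by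
    apply Finset.card_image_of_injOn
    intro a ha b hb hab
    have := congrArg (Finset.image p) hab
    rwa [himgp a (hE'sub a ha).1, himgp b (hE'sub b hb).1] at this
  have hEFr : ∀ e ∈ EF, e.card = r := by
    intro e he
    obtain ⟨a, ha, rfl⟩ := Finset.mem_image.1 he
    have hinjOn : Set.InjOn j a := by
      intro x hx y hy hxy
      have := congrArg p hxy
      rwa [hpj x ((hE'sub a ha).1 hx), hpj y ((hE'sub a ha).1 hy)] at this
    rw [Finset.card_image_of_injOn hinjOn, (hE'sub a ha).2]
  have hfree : hypFree EH EF := by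
    rintro ⟨f, hfinj, hf⟩
    have hedge : ∀ e ∈ EH, e.image (p ∘ f) ∈ E' := by
      intro e he
      obtain ⟨a, ha, haeq⟩ := Finset.mem_image.1 (hf e he)
      have : e.image (p ∘ f) = (e.image f).image p := by
        rw [Finset.image_image]
      rw [this, ← haeq, himgp a (hE'sub a ha).1]
      exact ha
    have hgmem : (p ∘ f) ∈ injHomsIn EH E S := by
      refine mem_filter.2 ⟨mem_univ _, hpinj.comp hfinj, fun e he => ?_, fun x => hpS _⟩
      exact mem_filter.1 (mem_sdiff.1 (hedge e he)).1 |>.1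
    have hin : e₀.image (p ∘ f) ∈ D :=
      Finset.mem_image.2 ⟨p ∘ f, hgmem, rfl⟩
    exact (mem_sdiff.1 (hedge e₀ he₀)).2 hin
  -- cardinality chain
  have hcard1 : (E.filter (fun e => e ⊆ S)).card ≤ E'.card + (injHomsIn EH E S).card := by
    have hsub : (E.filter (fun e => e ⊆ S)) ⊆ E' ∪ D := by
      rw [hE', Finset.sdiff_union_self_eq_union]
      exact Finset.subset_union_left
    calc (E.filter (fun e => e ⊆ S)).card ≤ (E' ∪ D).card := Finset.card_le_card hsub
      _ ≤ E'.card + D.card := Finset.card_union_le _ _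
      _ ≤ E'.card + (injHomsIn EH E S).card :=
          Nat.add_le_add_left (Finset.card_image_le) _
  have hfinal : T / (N.choose n : ℝ) ≤ (exNum r n EH : ℝ) := by
    have hex : (EF.card : ℝ) ≤ (exNum r n EH : ℝ) := by
      exact_mod_cast le_exNum EH EF hEFr hfree
    have : ((E.filter (fun e => e ⊆ S)).card : ℝ) - ((injHomsIn EH E S).card : ℝ)
        ≤ (EF.card : ℝ) := by
      rw [hEFcard]
      have := hcard1
      have h' : ((E.filter (fun e => e ⊆ S)).card : ℝ)
          ≤ (E'.card : ℝ) + ((injHomsIn EH E S).card : ℝ) := by exact_mod_cast this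
      linarith
    linarith
  calc T = (N.choose n : ℝ) * (T / (N.choose n : ℝ)) := by field_simp
    _ ≤ (N.choose n : ℝ) * (exNum r n EH : ℝ) := by
        apply mul_le_mul_of_nonneg_left hfinal (le_of_lt hCpos)

end Stmt15

set_option maxHeartbeats 2000000 in
theorem stmt_15 (r vH : ℕ) (EH : Finset (Finset (Fin vH)))
    (hH : ∀ e ∈ EH, e.card = r) (heH : 2 ≤ EH.card)
    (n₀ : ℕ) (hn₀ : 0 < n₀) (EG : Finset (Finset (Fin n₀)))
    (hG : ∀ e ∈ EG, e.card = r)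
    (α₀ β₀ : ℝ)
    (hα : α₀ = (Nat.factorial r * EG.card : ℝ) / (n₀ : ℝ) ^ r)
    (hβ : β₀ = (hypHomCount EH EG : ℝ) / (n₀ : ℝ) ^ vH)
    (h1 : β₀ < α₀ ^ EH.card)
    (h2 : β₀ / α₀ ≥ (n₀ : ℝ) ^ ((r : ℤ) - (vH : ℤ))) :
    ∃ c γ : ℝ, 0 < c ∧ 0 < γ ∧ ∃ N₀ : ℕ, ∀ n : ℕ, N₀ ≤ n →
      γ * (n : ℝ) ^ ((r : ℝ) - ((vH : ℝ) - r) / ((EH.card : ℝ) - 1) + c)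
        ≤ (exNum r n EH : ℝ) := by
  classical
  -- ## basic structural facts
  obtain ⟨e₀, he₀⟩ : ∃ x, x ∈ EH := Finset.card_pos.1 (by omega)
  have hr1 : 1 ≤ r := by
    by_contra h
    push_neg at h
    have hr0 : r = 0 := by omega
    have hemp : ∀ a ∈ EH, a = ∅ := fun a ha => Finset.card_eq_zero.1 (by rw [hH a ha, hr0])
    have : EH.card ≤ 1 := Finset.card_le_one.2 (fun a ha b hb => by rw [hemp a ha, hemp b hb])
    omega
  have hvr : r + 1 ≤ vH := by
    have hlt : 1 < EH.card := by omega
    obtain ⟨a, ha, b, hb, hab⟩ := Finset.one_lt_card.1 hlt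
    have hnsub : ¬ b ⊆ a := by
      intro hsub
      exact hab (Finset.eq_of_subset_of_card_le hsub (by rw [hH a ha, hH b hb])).symm
    obtain ⟨x, hxb, hxa⟩ := Finset.not_subset.1 hnsub
    have hle : (insert x a).card ≤ vH := by
      calc (insert x a).card ≤ (univ : Finset (Fin vH)).card := Finset.card_le_univ _
        _ = vH := by rw [Finset.card_univ, Fintype.card_fin]
    rw [Finset.card_insert_of_notMem hxa, hH a ha] at hle
    omega
  have hn₀R : (0:ℝ) < (n₀ : ℝ) := by exact_mod_cast hn₀
  have hzpos : (0:ℝ) < (n₀:ℝ) ^ ((r:ℤ) - (vH:ℤ)) := zpow_pos hn₀R _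
  have hα0 : 0 ≤ α₀ := by rw [hα]; positivity
  have hαpos : 0 < α₀ := by
    rcases hα0.lt_or_eq with h | h
    · exact h
    · exfalso
      have : β₀ / α₀ = 0 := by rw [← h, div_zero]
      rw [this] at h2
      linarith
  have hβpos : 0 < β₀ := by
    have hz : (n₀:ℝ)^((r:ℤ)-(vH:ℤ)) * α₀ ≤ β₀ := by
      rw [← le_div_iff₀ hαpos]
      exact h2
    nlinarith
  have hEGle : EG.card ≤ n₀.choose r := by
    have hsub : EG ⊆ (univ : Finset (Fin n₀)).powersetCard r :=
      fun a ha => Finset.mem_powersetCard.2 ⟨Finset.subset_univ _, hG a ha⟩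
    calc EG.card ≤ _ := Finset.card_le_card hsub
      _ = n₀.choose r := by rw [Finset.card_powersetCard, Finset.card_univ, Fintype.card_fin]
  have hα1 : α₀ ≤ 1 := by
    rw [hα, div_le_one (by positivity)]
    have hnat : r.factorial * EG.card ≤ n₀ ^ r := by
      calc r.factorial * EG.card ≤ r.factorial * n₀.choose r := Nat.mul_le_mul_left _ hEGle
        _ = n₀.descFactorial r := (Nat.descFactorial_eq_factorial_mul_choose _ _).symm
        _ ≤ n₀ ^ r := Nat.descFactorial_le_pow _ _
    calc ((r.factorial : ℝ) * EG.card) = ((r.factorial * EG.card : ℕ) : ℝ) := by push_cast; ring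
      _ ≤ ((n₀ ^ r : ℕ) : ℝ) := by exact_mod_cast hnat
      _ = (n₀:ℝ) ^ r := by push_cast; ring
  set q := β₀ / α₀ with hqdef
  have hqpos : 0 < q := div_pos hβpos hαpos
  have hqlt : q < α₀ ^ (EH.card - 1) := by
    rw [hqdef, div_lt_iff₀ hαpos]
    calc β₀ < α₀ ^ EH.card := h1
      _ = α₀ ^ (EH.card - 1) * α₀ := by
          rw [← pow_succ]
          congr 1
          omega
  have hq1 : q < 1 := lt_of_lt_of_le hqlt (pow_le_one₀ hα0 hα1)
  have hn₀2 : 2 ≤ n₀ := by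
    by_contra h
    push_neg at h
    have : n₀ = 1 := by omega
    rw [this] at h2
    simp only [Nat.cast_one, one_zpow] at h2
    linarith
  -- ## logarithmic quantities
  set L := -Real.log α₀ with hLdef
  set M := -Real.log q with hMdef
  have hL0 : 0 ≤ L := by
    rw [hLdef, neg_nonneg]
    exact Real.log_nonpos hα0 hα1
  have hMpos : 0 < M := by
    rw [hMdef, neg_pos]
    exact Real.log_neg hqpos hq1
  have hcastE : ((EH.card - 1 : ℕ) : ℝ) = (EH.card : ℝ) - 1 := by
    have h1' : 1 ≤ EH.card := by omega
    push_cast [Nat.cast_sub h1']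
    ring
  have hML : ((EH.card : ℝ) - 1) * L < M := by
    have hlog := Real.log_lt_log hqpos hqlt
    rw [Real.log_pow, hcastE] at hlog
    have hrw1 : ((EH.card : ℝ) - 1) * L = -(((EH.card : ℝ) - 1) * Real.log α₀) := by
      rw [hLdef]; ring
    have hrw2 : M = -Real.log q := hMdef
    rw [hrw1, hrw2]
    linarith
  have hMle : M ≤ ((vH:ℝ) - r) * Real.log n₀ := by
    have hlog : Real.log ((n₀:ℝ) ^ ((r:ℤ) - (vH:ℤ))) ≤ Real.log q :=
      Real.log_le_log hzpos h2
    rw [Real.log_zpow] at hlog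
    push_cast at hlog
    have hrw : ((vH:ℝ) - r) * Real.log n₀ = -(((r:ℝ) - vH) * Real.log n₀) := by ring
    rw [hMdef, hrw]
    linarith
  have hlogn₀pos : 0 < Real.log n₀ := Real.log_pos (by exact_mod_cast hn₀2)
  have hvHrR : (0:ℝ) < (vH:ℝ) - r := by
    have : (r:ℝ) + 1 ≤ (vH:ℝ) := by exact_mod_cast hvr
    linarith
  have heR : (0:ℝ) < (EH.card:ℝ) - 1 := by
    have : (2:ℝ) ≤ (EH.card:ℝ) := by exact_mod_cast heH
    linarith
  -- ## constants
  set c := ((vH:ℝ) - r) * (1/((EH.card:ℝ)-1) - L/M) with hcdef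
  have hcpos : 0 < c := by
    apply mul_pos hvHrR
    rw [sub_pos, div_lt_div_iff₀ hMpos heR]
    linarith [hML]
  set K₁ := (2:ℝ)^(vH + r + 1) * (r.factorial : ℝ) with hK₁def
  have hK₁pos : 0 < K₁ := by positivity
  have hK₁1 : 1 ≤ K₁ := by
    rw [hK₁def]
    have h2p : (1:ℝ) ≤ 2^(vH+r+1) := one_le_pow₀ (by norm_num)
    have hfp : (1:ℝ) ≤ (r.factorial:ℝ) := by exact_mod_cast r.factorial_pos
    nlinarith
  have hlogK₁0 : 0 ≤ Real.log K₁ := Real.log_nonneg hK₁1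
  set γ := α₀ * Real.exp (-(Real.log K₁ * L / M)) / ((2:ℝ)^(r+1) * (r.factorial:ℝ)) with hγdef
  have hγpos : 0 < γ := div_pos (mul_pos hαpos (Real.exp_pos _)) (by positivity)
  refine ⟨c, γ, hcpos, hγpos, 2*vH + 2*r + 2, fun n hn => ?_⟩
  -- ## given n, choose the tensor power k
  have hn2 : 2 ≤ n := by omega
  have hnRpos : (0:ℝ) < (n:ℝ) := by
    have : 0 < n := by omega
    exact_mod_cast this
  have hlognpos : 0 < Real.log n := Real.log_pos (by exact_mod_cast hn2)
  set k₀ : ℝ := (((vH:ℝ) - r) * Real.log n + Real.log K₁) / M with hk₀def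
  have hk₀pos : 0 < k₀ := div_pos (by nlinarith) hMpos
  set k := ⌈k₀⌉₊ with hkdef
  have hkk₀ : k₀ ≤ (k:ℝ) := Nat.le_ceil _
  have hkub : (k:ℝ) ≤ k₀ + 1 := le_of_lt (Nat.ceil_lt_add_one hk₀pos.le)
  have hkpos : 0 < k := Nat.ceil_pos.2 hk₀pos
  have hk₀M : k₀ * M = ((vH:ℝ) - r) * Real.log n + Real.log K₁ := by
    rw [hk₀def]
    field_simp
  -- n ≤ n₀ ^ k
  have hlogn_le : Real.log n ≤ (k:ℝ) * Real.log n₀ := by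
    have hA : Real.log n * M ≤ (((vH:ℝ) - r) * Real.log n + Real.log K₁) * Real.log n₀ := by
      calc Real.log n * M ≤ Real.log n * (((vH:ℝ)-r) * Real.log n₀) :=
            mul_le_mul_of_nonneg_left hMle hlognpos.le
        _ ≤ (((vH:ℝ) - r) * Real.log n + Real.log K₁) * Real.log n₀ := by nlinarith
    have hB : Real.log n ≤ k₀ * Real.log n₀ := by
      rw [hk₀def, div_mul_eq_mul_div, le_div_iff₀ hMpos]
      linarith
    calc Real.log n ≤ k₀ * Real.log n₀ := hB
      _ ≤ (k:ℝ) * Real.log n₀ := mul_le_mul_of_nonneg_right hkk₀ hlogn₀pos.le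
  have hnN : n ≤ n₀ ^ k := by
    have hR : (n:ℝ) ≤ (n₀:ℝ) ^ k := by
      rw [← Real.exp_log hnRpos, ← Real.exp_log (show (0:ℝ) < (n₀:ℝ)^k by positivity),
        Real.exp_le_exp, Real.log_pow]
      exact hlogn_le
    have : (n:ℝ) ≤ ((n₀ ^ k : ℕ):ℝ) := by push_cast; exact hR
    exact_mod_cast this
  -- ## the tensor power construction
  have hNW : Fintype.card (Fin k → Fin n₀) = n₀ ^ k := by simp
  have hrn : r ≤ n := by omega
  have hvn : vH ≤ n := by omega
  have hn0 : 0 < n := by omega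
  have hmain := Stmt15.main_construction EH he₀ (Stmt15.powE r n₀ EG k)
    Stmt15.powE_uniform hrn hvn hn0 (by rw [hNW]; exact hnN)
  rw [hNW] at hmain
  set N := n₀ ^ k with hNdef
  -- counting facts
  set m := r.factorial * EG.card with hmdef
  have hEkcount : r.factorial * (Stmt15.powE r n₀ EG k).card = m ^ k := by
    rw [← Stmt15.card_oeF (Stmt15.powE_uniform), Stmt15.card_oeF_powE hG hkpos,
      Stmt15.card_oeF hG]
  have hhoms : (Stmt15.homsF EH (Stmt15.powE r n₀ EG k)).card = (hypHomCount EH EG) ^ k := by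
    rw [Stmt15.card_homsF_powE hH hG hkpos, Stmt15.hypHomCount_eq_card]
  set hG0 := hypHomCount EH EG with hhdef
  -- real abbreviations
  set Ek : ℝ := ((Stmt15.powE r n₀ EG k).card : ℝ) with hEkdef
  set Hk : ℝ := ((hG0 ^ k : ℕ) : ℝ) with hHkdef
  have hHkfromhoms : ((Stmt15.homsF EH (Stmt15.powE r n₀ EG k)).card : ℝ) = Hk := by
    rw [hHkdef, hhoms]
  rw [hHkfromhoms] at hmain
  have hrfacpos : (0:ℝ) < (r.factorial : ℝ) := by exact_mod_cast r.factorial_pos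
  have hEkval : Ek = (m:ℝ)^k / (r.factorial : ℝ) := by
    rw [eq_div_iff (ne_of_gt hrfacpos), hEkdef]
    have : ((r.factorial * (Stmt15.powE r n₀ EG k).card : ℕ) : ℝ) = ((m ^ k : ℕ) : ℝ) := by
      exact_mod_cast congrArg (Nat.cast : ℕ → ℝ) hEkcount
    push_cast at this
    linarith
  -- N bounds
  have hNR : ((N:ℕ):ℝ) = (n₀:ℝ)^k := by rw [hNdef]; push_cast; ring
  have hNpos : 0 < N := by positivity
  have hNRpos : (0:ℝ) < ((N:ℕ):ℝ) := by exact_mod_cast hNpos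
  have h2vHn : 2 * vH ≤ n := by omega
  have h2rn : 2 * r ≤ n := by omega
  have hvN : vH ≤ N := le_trans hvn hnN
  have hrN : r ≤ N := le_trans hrn hnN
  -- descFactorial abbreviations
  set dnr : ℝ := ((n.descFactorial r : ℕ) : ℝ) with hdnr
  set dNr : ℝ := ((N.descFactorial r : ℕ) : ℝ) with hdNr
  set dnv : ℝ := ((n.descFactorial vH : ℕ) : ℝ) with hdnv
  set dNv : ℝ := ((N.descFactorial vH : ℕ) : ℝ) with hdNv
  have hdNrpos : (0:ℝ) < dNr := by
    rw [hdNr]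
    have : N.descFactorial r ≠ 0 := by
      rw [Ne, Nat.descFactorial_eq_zero_iff_lt]
      omega
    exact_mod_cast Nat.pos_of_ne_zero this
  have hdNvpos : (0:ℝ) < dNv := by
    rw [hdNv]
    have : N.descFactorial vH ≠ 0 := by
      rw [Ne, Nat.descFactorial_eq_zero_iff_lt]
      omega
    exact_mod_cast Nat.pos_of_ne_zero this
  have hCpos : (0:ℝ) < ((N.choose n : ℕ) : ℝ) := by exact_mod_cast Nat.choose_pos hnN
  -- ratio identities
  have hratio_r : (((N - r).choose (n - r) : ℕ) : ℝ) = ((N.choose n : ℕ) : ℝ) * dnr / dNr := by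
    rw [eq_div_iff (ne_of_gt hdNrpos)]
    have := Stmt15.choose_ratio hrn hnN
    have hcast : (((N - r).choose (n - r) : ℕ) : ℝ) * ((N.descFactorial r : ℕ) : ℝ)
        = ((N.choose n : ℕ) : ℝ) * ((n.descFactorial r : ℕ) : ℝ) := by exact_mod_cast this
    rw [hdNr, hdnr]
    linarith [hcast]
  have hratio_v : (((N - vH).choose (n - vH) : ℕ) : ℝ) = ((N.choose n : ℕ) : ℝ) * dnv / dNv := by
    rw [eq_div_iff (ne_of_gt hdNvpos)]
    have := Stmt15.choose_ratio hvn hnN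
    have hcast : (((N - vH).choose (n - vH) : ℕ) : ℝ) * ((N.descFactorial vH : ℕ) : ℝ)
        = ((N.choose n : ℕ) : ℝ) * ((n.descFactorial vH : ℕ) : ℝ) := by exact_mod_cast this
    rw [hdNv, hdnv]
    linarith [hcast]
  rw [hratio_r, hratio_v] at hmain
  -- power identities
  have hαk : α₀ ^ k = (m:ℝ)^k / ((N:ℕ):ℝ)^r := by
    rw [hα, hNR, div_pow, ← pow_mul, ← pow_mul, Nat.mul_comm r k]
    congr 1
    rw [hmdef]
    push_cast
    ring
  have hβk : β₀ ^ k = ((hG0:ℕ):ℝ)^k / ((N:ℕ):ℝ)^vH := by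
    rw [hβ, hNR, div_pow, ← pow_mul, ← pow_mul, Nat.mul_comm vH k]
  have hHkval : Hk = ((hG0:ℕ):ℝ)^k := by rw [hHkdef]; push_cast; ring
  -- ## key estimates
  set P : ℝ := α₀^k * (n:ℝ)^r / ((2:ℝ)^(r+1) * (r.factorial:ℝ)) with hPdef
  -- T1 : lower bound for the edge term
  have hdnr_ge : ((n:ℝ) - r)^r ≤ dnr := by
    have hnat := Stmt15.sub_pow_le_descFactorial n r
    have hcast : (((n - r : ℕ)^r : ℕ) : ℝ) ≤ dnr := by rw [hdnr]; exact_mod_cast hnat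
    have : (((n - r: ℕ) : ℕ) : ℝ) = (n:ℝ) - r := by
      push_cast [Nat.cast_sub hrn]
      ring
    calc ((n:ℝ) - r)^r = (((n - r : ℕ) : ℝ))^r := by rw [this]
      _ = (((n - r : ℕ)^r : ℕ) : ℝ) := by push_cast; ring
      _ ≤ dnr := hcast
  have hdNr_le : dNr ≤ ((N:ℕ):ℝ)^r := by
    rw [hdNr]
    exact_mod_cast Nat.descFactorial_le_pow N r
  have hdnr0 : (0:ℝ) ≤ dnr := by rw [hdnr]; exact Nat.cast_nonneg _
  have hEk0 : 0 ≤ Ek := by rw [hEkdef]; exact Nat.cast_nonneg _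
  have hNpowr_pos : (0:ℝ) < (((N:ℕ):ℝ))^r := pow_pos hNRpos r
  have hn2nonneg : (0:ℝ) ≤ (n:ℝ)/2 := by positivity
  have hT1 : α₀^k * (n:ℝ)^r / ((2:ℝ)^r * (r.factorial:ℝ)) ≤ Ek * dnr / dNr := by
    have step1 : Ek * (((n:ℝ) - r)^r) / (((N:ℕ):ℝ)^r) ≤ Ek * dnr / dNr :=
      div_le_div₀ (mul_nonneg hEk0 hdnr0)
        (mul_le_mul_of_nonneg_left hdnr_ge hEk0) hdNrpos hdNr_le
    have hn2r : (n:ℝ)/2 ≤ (n:ℝ) - r := by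
      have : (2*r : ℝ) ≤ (n:ℝ) := by exact_mod_cast h2rn
      linarith
    have hexp : α₀^k * (n:ℝ)^r / ((2:ℝ)^r * (r.factorial:ℝ))
        = Ek * (((n:ℝ)/2)^r) / (((N:ℕ):ℝ)^r) := by
      rw [hEkval, hαk, div_pow]
      ring
    have step2 : α₀^k * (n:ℝ)^r / ((2:ℝ)^r * (r.factorial:ℝ))
        ≤ Ek * (((n:ℝ) - r)^r) / (((N:ℕ):ℝ)^r) := by
      rw [hexp]
      exact div_le_div₀ (mul_nonneg hEk0 (pow_nonneg (le_trans hn2nonneg hn2r) r))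
        (mul_le_mul_of_nonneg_left (pow_le_pow_left₀ hn2nonneg hn2r r) hEk0)
        hNpowr_pos le_rfl
    linarith
  -- T2 : upper bound for the homomorphism term
  have hdnv_le : dnv ≤ (n:ℝ)^vH := by
    rw [hdnv]
    exact_mod_cast Nat.descFactorial_le_pow n vH
  have hdNv_ge : (((N:ℕ):ℝ)/2)^vH ≤ dNv := by
    have hnat := Stmt15.sub_pow_le_descFactorial N vH
    have hcast : (((N - vH : ℕ)^vH : ℕ) : ℝ) ≤ dNv := by rw [hdNv]; exact_mod_cast hnat
    have hsub : (((N - vH : ℕ) : ℕ) : ℝ) = ((N:ℕ):ℝ) - vH := by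
      push_cast [Nat.cast_sub hvN]
      ring
    have h2vN : 2 * vH ≤ N := le_trans h2vHn hnN
    have hhalf : ((N:ℕ):ℝ)/2 ≤ ((N:ℕ):ℝ) - vH := by
      have : (2*vH : ℝ) ≤ ((N:ℕ):ℝ) := by exact_mod_cast h2vN
      linarith
    calc (((N:ℕ):ℝ)/2)^vH ≤ (((N:ℕ):ℝ) - vH)^vH := pow_le_pow_left₀ (div_nonneg hNRpos.le (by norm_num)) hhalf vH
      _ = (((N - vH : ℕ) : ℝ))^vH := by rw [hsub]
      _ = (((N - vH : ℕ)^vH : ℕ) : ℝ) := by push_cast; ring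
      _ ≤ dNv := hcast
  have hT2 : Hk * dnv / dNv ≤ β₀^k * (n:ℝ)^vH * (2:ℝ)^vH := by
    have hHk0 : 0 ≤ Hk := by rw [hHkdef]; exact Nat.cast_nonneg _
    have hNhalfpos : (0:ℝ) < (((N:ℕ):ℝ)/2)^vH :=
      pow_pos (div_pos hNRpos (by norm_num)) vH
    have hnpow0 : (0:ℝ) ≤ (n:ℝ)^vH := pow_nonneg hnRpos.le vH
    have step1 : Hk * dnv / dNv ≤ Hk * (n:ℝ)^vH / ((((N:ℕ):ℝ)/2)^vH) :=
      div_le_div₀ (mul_nonneg hHk0 hnpow0)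
        (mul_le_mul_of_nonneg_left hdnv_le hHk0) hNhalfpos hdNv_ge
    have step2 : Hk * (n:ℝ)^vH / ((((N:ℕ):ℝ)/2)^vH) = β₀^k * (n:ℝ)^vH * (2:ℝ)^vH := by
      rw [hβk, hHkval, div_pow]
      have hNvpow : (((N:ℕ):ℝ))^vH ≠ 0 := ne_of_gt (pow_pos hNRpos vH)
      field_simp
    linarith
  -- exponential facts
  have hexp_pow : ∀ x : ℝ, 0 < x → ∀ t : ℕ, x ^ t = Real.exp ((t:ℝ) * Real.log x) := by
    intro x hx t
    rw [Real.exp_nat_mul, Real.exp_log hx]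
  have hkey : β₀^k * (n:ℝ)^vH * (2:ℝ)^vH ≤ P := by
    have hβα : β₀ = α₀ * q := by rw [hqdef]; field_simp
    have hkM : ((vH:ℝ) - r) * Real.log n + Real.log K₁ ≤ (k:ℝ) * M := by
      have := mul_le_mul_of_nonneg_right hkk₀ hMpos.le
      rw [hk₀M] at this
      linarith
    have hqk : q ^ k = Real.exp (-((k:ℝ) * M)) := by
      rw [hexp_pow q hqpos k, hMdef]
      ring_nf
    have hnvH : (n:ℝ)^vH = Real.exp ((vH:ℝ) * Real.log n) := hexp_pow _ hnRpos vH
    have hnr : (n:ℝ)^r = Real.exp ((r:ℝ) * Real.log n) := hexp_pow _ hnRpos r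
    have hK₁exp : K₁ = Real.exp (Real.log K₁) := (Real.exp_log hK₁pos).symm
    have hqkey : q^k * ((n:ℝ)^vH * K₁) ≤ (n:ℝ)^r := by
      rw [hqk, hnvH, hnr, hK₁exp, ← Real.exp_add, ← Real.exp_add, Real.exp_le_exp]
      linarith
    have hfac : (2:ℝ)^vH * ((2:ℝ)^(r+1) * (r.factorial:ℝ)) = K₁ := by
      rw [hK₁def]
      ring
    rw [hPdef, hβα, mul_pow]
    rw [le_div_iff₀ (by positivity)]
    calc α₀^k * q^k * (n:ℝ)^vH * (2:ℝ)^vH * ((2:ℝ)^(r+1) * (r.factorial:ℝ))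
        = α₀^k * (q^k * ((n:ℝ)^vH * ((2:ℝ)^vH * ((2:ℝ)^(r+1) * (r.factorial:ℝ))))) := by ring
      _ = α₀^k * (q^k * ((n:ℝ)^vH * K₁)) := by rw [hfac]
      _ ≤ α₀^k * (n:ℝ)^r := by
          exact mul_le_mul_of_nonneg_left hqkey (pow_nonneg hα0 k)
  -- combine into  P ≤ exNum
  have hQ : ((N.choose n : ℕ):ℝ) * P ≤ ((N.choose n : ℕ):ℝ) * (exNum r n EH : ℝ) := by
    have hsplit : Ek * (((N.choose n : ℕ):ℝ) * dnr / dNr)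
        - Hk * (((N.choose n : ℕ):ℝ) * dnv / dNv)
        = ((N.choose n : ℕ):ℝ) * (Ek * dnr / dNr - Hk * dnv / dNv) := by ring
    rw [hsplit] at hmain
    have hPle : P ≤ Ek * dnr / dNr - Hk * dnv / dNv := by
      have h2P : 2 * P = α₀^k * (n:ℝ)^r / ((2:ℝ)^r * (r.factorial:ℝ)) := by
        rw [hPdef, pow_succ]
        field_simp
      have hT2' : Hk * dnv / dNv ≤ P := le_trans hT2 hkey
      linarith [hT1]
    calc ((N.choose n : ℕ):ℝ) * P ≤ ((N.choose n : ℕ):ℝ) * (Ek * dnr / dNr - Hk * dnv / dNv) :=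
          mul_le_mul_of_nonneg_left hPle hCpos.le
      _ ≤ ((N.choose n : ℕ):ℝ) * (exNum r n EH : ℝ) := hmain
  have hPex : P ≤ (exNum r n EH : ℝ) := le_of_mul_le_mul_left hQ hCpos
  -- ## final comparison γ n^(…) ≤ P
  have hαkexp : α₀ ^ k = Real.exp (-((k:ℝ) * L)) := by
    rw [hexp_pow α₀ hαpos k, hLdef]
    ring_nf
  have hαk_ge : Real.exp (-((k₀+1) * L)) ≤ α₀ ^ k := by
    rw [hαkexp, Real.exp_le_exp]
    have : (k:ℝ) * L ≤ (k₀+1) * L := mul_le_mul_of_nonneg_right hkub hL0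
    linarith
  have hnr_exp : (n:ℝ)^r = Real.exp ((r:ℝ) * Real.log n) := hexp_pow _ hnRpos r
  have hrpow : (n:ℝ) ^ ((r : ℝ) - ((vH : ℝ) - r) / ((EH.card : ℝ) - 1) + c)
      = Real.exp (Real.log n * ((r:ℝ) - ((vH:ℝ) - r) * (L/M))) := by
    rw [Real.rpow_def_of_pos hnRpos]
    congr 1
    rw [hcdef]
    field_simp
    ring
  have hnum : α₀ * Real.exp (-(Real.log K₁ * L / M))
        * Real.exp (Real.log n * ((r:ℝ) - ((vH:ℝ) - r) * (L/M)))
      ≤ α₀^k * (n:ℝ)^r := by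
    have hLHS : α₀ * Real.exp (-(Real.log K₁ * L / M))
          * Real.exp (Real.log n * ((r:ℝ) - ((vH:ℝ) - r) * (L/M)))
        = Real.exp (-((k₀+1) * L) + (r:ℝ) * Real.log n) := by
      rw [show α₀ = Real.exp (Real.log α₀) from (Real.exp_log hαpos).symm]
      rw [← Real.exp_add, ← Real.exp_add]
      congr 1
      have hlogα : Real.log α₀ = -L := by rw [hLdef]; ring
      rw [hlogα, hk₀def]
      field_simp
      ring
    rw [hLHS, Real.exp_add, hnr_exp]
    exact mul_le_mul_of_nonneg_right hαk_ge (Real.exp_pos _).le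
  have hplpos : (0:ℝ) < (2:ℝ)^(r+1) * (r.factorial:ℝ) := by positivity
  calc γ * (n : ℝ) ^ ((r : ℝ) - ((vH : ℝ) - r) / ((EH.card : ℝ) - 1) + c)
      = α₀ * Real.exp (-(Real.log K₁ * L / M))
          * Real.exp (Real.log n * ((r:ℝ) - ((vH:ℝ) - r) * (L/M)))
          / ((2:ℝ)^(r+1) * (r.factorial:ℝ)) := by
        rw [hγdef, hrpow]
        ring
    _ ≤ α₀^k * (n:ℝ)^r / ((2:ℝ)^(r+1) * (r.factorial:ℝ)) :=
        div_le_div₀ (mul_nonneg (pow_nonneg hα0 k) (pow_nonneg hnRpos.le r))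
          hnum hplpos le_rfl
    _ = P := by rw [hPdef]
    _ ≤ (exNum r n EH : ℝ) := hPex
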